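/- In a solution of the dipole Poisson equation B ψ = q with source at r and sink at s, the potential ψ attains its maximum at r and its minimum at s: ψ_n ≤ ψ_r and ψ_n ≥ ψ_s for all nodes n. -/

import Mathlib

/-!
Discrete maximum principle. At a node `i` where `ψ` is maximal, `(B ψ)_i = ∑ⱼ w_ij (ψ_i - ψ_j)`
is a sum of nonnegative terms, so if it is `≤ 0` every neighbour of `i` is maximal too. Off the
source `r` we have `(B ψ)_n = q_n ≤ 0`, so by connectivity the maximum spreads to `r`. Applying
the same argument to `-ψ`, whose only positive charge sits at `s`, gives the minimum at `s`.
-/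

open Matrix BigOperators

/-- The weighted Laplacian of a weight function `w` on `Fin N`. -/
def lapMat {N : ℕ} (w : Fin N → Fin N → ℝ) : Matrix (Fin N) (Fin N) ℝ :=
  fun i j => if i = j then ∑ k, w i k else - w i j

/-- Symmetric, nonnegative weights with zero diagonal. -/
def IsWeight {N : ℕ} (w : Fin N → Fin N → ℝ) : Prop :=
  (∀ i j, w i j = w j i) ∧ (∀ i j, 0 ≤ w i j) ∧ (∀ i, w i i = 0)

/-- The simple graph whose edges are the pairs with nonzero weight. -/
def wGraph {N : ℕ} (w : Fin N → Fin N → ℝ) : SimpleGraph (Fin N) where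
  Adj i j := i ≠ j ∧ (w i j ≠ 0 ∨ w j i ≠ 0)
  symm := ⟨fun i j ⟨h1, h2⟩ => ⟨h1.symm, h2.symm⟩⟩
  loopless := ⟨fun i h => h.1 rfl⟩

/-- The dipole vector `ν_rs`: `+1` at `r`, `-1` at `s`, `0` elsewhere. -/
def dipole {N : ℕ} (r s : Fin N) : Fin N → ℝ :=
  fun i => (if i = r then (1:ℝ) else 0) - (if i = s then (1:ℝ) else 0)

/-- `Bd` is the Moore-Penrose pseudoinverse of `B` (the four Penrose axioms). -/
def IsMoorePenrose {N : ℕ} (B Bd : Matrix (Fin N) (Fin N) ℝ) : Prop :=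
  B * Bd * B = B ∧ Bd * B * Bd = Bd ∧ (B * Bd)ᵀ = B * Bd ∧ (Bd * B)ᵀ = Bd * B

/-- The locality factor `η(r,s) = b_rs ν_rs^T B^† ν_rs`. -/
def eta {N : ℕ} (w : Fin N → Fin N → ℝ) (Bdag : Matrix (Fin N) (Fin N) ℝ)
    (r s : Fin N) : ℝ :=
  w r s * (dipole r s ⬝ᵥ Bdag.mulVec (dipole r s))

section MaximumPrinciple

variable {N : ℕ} {w : Fin N → Fin N → ℝ}

lemma lapMat_eq_diagonal_sub (hdiag : ∀ i, w i i = 0) :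
    lapMat w = diagonal (fun i => ∑ k, w i k) - of w := by
  ext i j
  by_cases hij : i = j
  · subst hij; simp [lapMat, hdiag]
  · simp [lapMat, hij]

lemma lapMat_mulVec_apply (hdiag : ∀ i, w i i = 0) (ψ : Fin N → ℝ) (i : Fin N) :
    (lapMat w *ᵥ ψ) i = ∑ j, w i j * (ψ i - ψ j) := by
  rw [lapMat_eq_diagonal_sub hdiag, sub_mulVec, Pi.sub_apply, mulVec_diagonal]
  simp [mulVec, dotProduct, mul_sub, Finset.sum_sub_distrib, Finset.sum_mul]

lemma IsWeight.ne_zero_of_adj (hw : IsWeight w) {i j : Fin N} (hadj : (wGraph w).Adj i j) :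
    w i j ≠ 0 :=
  hadj.2.elim id fun h => hw.1 i j ▸ h

lemma IsWeight.eq_of_adj_of_isMax (hw : IsWeight w) {ψ : Fin N → ℝ} {i j : Fin N}
    (hmax : ∀ k, ψ k ≤ ψ i) (hsub : (lapMat w *ᵥ ψ) i ≤ 0) (hadj : (wGraph w).Adj i j) :
    ψ j = ψ i := by
  have hterm : ∀ k ∈ Finset.univ, 0 ≤ w i k * (ψ i - ψ k) := fun k _ =>
    mul_nonneg (hw.2.1 i k) (sub_nonneg.mpr (hmax k))
  have hsum : ∑ k, w i k * (ψ i - ψ k) = 0 :=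
    le_antisymm (lapMat_mulVec_apply hw.2.2 ψ i ▸ hsub) (Finset.sum_nonneg hterm)
  have hij := (Finset.sum_eq_zero_iff_of_nonneg hterm).mp hsum j (Finset.mem_univ j)
  rcases mul_eq_zero.mp hij with h | h
  · exact absurd h (hw.ne_zero_of_adj hadj)
  · linarith

lemma IsWeight.le_of_lapMat_mulVec_nonpos (hw : IsWeight w) (hconn : (wGraph w).Connected)
    {ψ : Fin N → ℝ} {r : Fin N} (hsub : ∀ n, n ≠ r → (lapMat w *ᵥ ψ) n ≤ 0) :
    ∀ n, ψ n ≤ ψ r := by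
  have : Nonempty (Fin N) := ⟨r⟩
  obtain ⟨m, hm⟩ := Finite.exists_max ψ
  suffices hr : ψ r = ψ m from fun n => hr ▸ hm n
  by_contra hr
  obtain ⟨p⟩ := hconn.preconnected m r
  obtain ⟨d, -, hfst, hsnd⟩ := p.exists_boundary_dart {i | ψ i = ψ m} rfl hr
  have hfst_ne : d.fst ≠ r := fun h => hr (h ▸ hfst)
  refine hsnd ?_
  rw [Set.mem_ofPred_eq, ← hfst]
  exact hw.eq_of_adj_of_isMax (fun k => hfst ▸ hm k) (hsub _ hfst_ne) d.adj

end MaximumPrinciple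

theorem potential_extremal_at_source_and_sink {N : ℕ} (w : Fin N → Fin N → ℝ)
    (hw : IsWeight w) (hconn : (wGraph w).Connected)
    (r s : Fin N) (q ψ : Fin N → ℝ)
    (hq : (lapMat w).mulVec ψ = q)
    (hqr : 0 < q r) (hqs : q s = - q r) (hq0 : ∀ n, n ≠ r → n ≠ s → q n = 0) :
    ∀ n, ψ n ≤ ψ r ∧ ψ s ≤ ψ n := by
  have hmax : ∀ n, ψ n ≤ ψ r := by
    refine hw.le_of_lapMat_mulVec_nonpos hconn fun n hnr => ?_
    rw [hq]
    by_cases hns : n = s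
    · subst hns; linarith
    · exact (hq0 n hnr hns).le
  have hmin : ∀ n, -ψ n ≤ -ψ s := by
    refine hw.le_of_lapMat_mulVec_nonpos (ψ := -ψ) hconn fun n hns => ?_
    rw [mulVec_neg, hq, Pi.neg_apply, neg_nonpos]
    by_cases hnr : n = r
    · subst hnr; exact hqr.le
    · exact (hq0 n hnr hns).ge
  exact fun n => ⟨hmax n, neg_le_neg_iff.mp (hmin n)⟩
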